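/- Asymptotics of the incomplete Gaussian moment: for the function χ with χ(0)=0 and χ'(v) = (e^{β v²/2}/(v^{d-1} D)) ∫₀^v e^{-β w²/2} w^{d-1} dw (constant D > 0), one has χ(v) ~ (1/4) Γ(d/2) (2/β)^{d/2+1} e^{β v²/2} / (D v^d) as v → ∞. -/

import Mathlib

open Real Set Filter intervalIntegral

/-!
The comparison function `g(v) = C e^{βv²/2} / (D v^d)`, `C = (1/4) Γ(d/2) (2/β)^{d/2+1}`,
has derivative `e^{βv²/2} / (v^{d-1} D) · C (β - d / v²)`. Hence `χ' / g'` equals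
`∫₀^v e^{-βw²/2} w^{d-1} dw / (C (β - d / v²))`, which tends to
`(1/2) Γ(d/2) (2/β)^{d/2} / (C β) = 1`. Since `g → ∞`, L'Hôpital's rule in its `∞/∞` form
gives `χ / g → 1`.
-/

section LHopital

variable {f g f' g' : ℝ → ℝ}

lemma eventually_div_lt_of_deriv_le_mul (hf : ∀ᶠ v in atTop, HasDerivAt f (f' v) v)
    (hg : ∀ᶠ v in atTop, HasDerivAt g (g' v) v) (hgtop : Tendsto g atTop atTop)
    {c c' : ℝ} (hle : ∀ᶠ v in atTop, f' v ≤ c * g' v) (hcc' : c < c') :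
    ∀ᶠ v in atTop, f v / g v < c' := by
  obtain ⟨a, ha⟩ := eventually_atTop.mp (hf.and (hg.and hle))
  have hderiv : ∀ v ∈ Ici a, HasDerivAt (fun v => c * g v - f v) (c * g' v - f' v) v :=
    fun v hv => ((ha v hv).2.1.const_mul c).sub (ha v hv).1
  have hmono : MonotoneOn (fun v => c * g v - f v) (Ici a) := by
    refine monotoneOn_of_hasDerivWithinAt_nonneg (f' := fun v => c * g' v - f' v) (convex_Ici a)
      (fun v hv => (hderiv v hv).continuousAt.continuousWithinAt) (fun v hv => ?_) (fun v hv => ?_)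
    · exact (hderiv v (interior_subset hv)).hasDerivWithinAt
    · linarith [(ha v (interior_subset hv)).2.2]
  have hsmall : Tendsto (fun v => (f a - c * g a) / g v) atTop (nhds 0) :=
    tendsto_const_nhds.div_atTop hgtop
  filter_upwards [eventually_ge_atTop a, hgtop.eventually_gt_atTop 0,
    hsmall.eventually (gt_mem_nhds (sub_pos.2 hcc'))] with v hav hgv hv
  have hfv : f v ≤ c * g v + (f a - c * g a) := by linarith [hmono self_mem_Ici hav hav]
  rw [div_lt_iff₀ hgv] at hv ⊢
  linarith

theorem lhopital_atTop_of_tendsto_atTop (hf : ∀ᶠ v in atTop, HasDerivAt f (f' v) v)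
    (hg : ∀ᶠ v in atTop, HasDerivAt g (g' v) v) (hg' : ∀ᶠ v in atTop, 0 < g' v)
    (hgtop : Tendsto g atTop atTop) {l : ℝ}
    (hlim : Tendsto (fun v => f' v / g' v) atTop (nhds l)) :
    Tendsto (fun v => f v / g v) atTop (nhds l) := by
  refine tendsto_order.2 ⟨fun c' hc' => ?_, fun c' hc' => ?_⟩
  · obtain ⟨c, hc'c, hcl⟩ := exists_between hc'
    have hle : ∀ᶠ v in atTop, -f' v ≤ -c * g' v := by
      filter_upwards [hg', hlim.eventually (lt_mem_nhds hcl)] with v hgv hv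
      rw [lt_div_iff₀ hgv] at hv
      linarith
    filter_upwards [eventually_div_lt_of_deriv_le_mul (hf.mono fun v h => h.neg) hg hgtop hle
      (neg_lt_neg hc'c)] with v hv
    rw [Pi.neg_apply, neg_div] at hv
    linarith
  · obtain ⟨c, hlc, hcc'⟩ := exists_between hc'
    have hle : ∀ᶠ v in atTop, f' v ≤ c * g' v := by
      filter_upwards [hg', hlim.eventually (gt_mem_nhds hlc)] with v hgv hv
      rw [div_lt_iff₀ hgv] at hv
      linarith
    exact eventually_div_lt_of_deriv_le_mul hf hg hgtop hle hcc'

end LHopital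

section GaussianMoment

variable {β : ℝ}

lemma integrableOn_exp_neg_mul_sq_mul_pow (hβ : 0 < β) (k : ℕ) :
    MeasureTheory.IntegrableOn (fun w : ℝ => exp (-β * w ^ 2 / 2) * w ^ k) (Ioi 0) := by
  refine (integrableOn_rpow_mul_exp_neg_mul_sq (half_pos hβ)
    (neg_one_lt_zero.trans_le k.cast_nonneg)).congr_fun (fun w _ => ?_) measurableSet_Ioi
  dsimp only
  rw [rpow_natCast]
  ring_nf

lemma integral_exp_neg_mul_sq_mul_pow (hβ : 0 < β) (k : ℕ) :
    ∫ w in Ioi (0 : ℝ), exp (-β * w ^ 2 / 2) * w ^ k =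
      1 / 2 * Gamma (((k : ℝ) + 1) / 2) * (2 / β) ^ (((k : ℝ) + 1) / 2) := by
  have h := integral_rpow_mul_exp_neg_mul_rpow two_pos
    (neg_one_lt_zero.trans_le (k.cast_nonneg : (0 : ℝ) ≤ k)) (half_pos hβ)
  have hinv : (β / 2) ^ (-((k : ℝ) + 1) / 2) = (2 / β) ^ (((k : ℝ) + 1) / 2) := by
    rw [neg_div, rpow_neg (half_pos hβ).le, ← inv_rpow (half_pos hβ).le, inv_div]
  calc ∫ w in Ioi (0 : ℝ), exp (-β * w ^ 2 / 2) * w ^ k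
      = ∫ w in Ioi (0 : ℝ), w ^ (k : ℝ) * exp (-(β / 2) * w ^ (2 : ℝ)) :=
        MeasureTheory.setIntegral_congr_fun measurableSet_Ioi fun w _ => by
          rw [rpow_natCast, rpow_two]
          ring_nf
    _ = _ := by
      rw [h, hinv]
      ring

lemma tendsto_intervalIntegral_exp_neg_mul_sq_mul_pow (hβ : 0 < β) (k : ℕ) :
    Tendsto (fun v => ∫ w in (0 : ℝ)..v, exp (-β * w ^ 2 / 2) * w ^ k) atTop
      (nhds (1 / 2 * Gamma (((k : ℝ) + 1) / 2) * (2 / β) ^ (((k : ℝ) + 1) / 2))) := by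
  rw [← integral_exp_neg_mul_sq_mul_pow hβ k]
  exact MeasureTheory.intervalIntegral_tendsto_integral_Ioi 0
    (integrableOn_exp_neg_mul_sq_mul_pow hβ k) tendsto_id

lemma hasDerivAt_exp_mul_sq_div_pow (β : ℝ) (k : ℕ) {v : ℝ} (hv : v ≠ 0) :
    HasDerivAt (fun v => exp (β * v ^ 2 / 2) / v ^ (k + 1))
      (exp (β * v ^ 2 / 2) / v ^ k * (β - (k + 1) / v ^ 2)) v := by
  have hexp : HasDerivAt (fun v => exp (β * v ^ 2 / 2)) (exp (β * v ^ 2 / 2) * (β * v)) v := by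
    convert (((hasDerivAt_pow 2 v).const_mul β).div_const 2).exp using 1
    ring
  refine (hexp.fun_div (hasDerivAt_pow (k + 1) v) (pow_ne_zero _ hv)).congr_deriv ?_
  field_simp
  push_cast
  ring

lemma tendsto_exp_mul_sq_div_pow_atTop (hβ : 0 < β) (n : ℕ) :
    Tendsto (fun v => exp (β * v ^ 2 / 2) / v ^ n) atTop atTop := by
  refine tendsto_atTop_mono' atTop ?_ ((tendsto_exp_mul_div_rpow_atTop n (β / 2) (half_pos hβ)))
  filter_upwards [eventually_ge_atTop 1] with v hv
  rw [rpow_natCast]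
  have hv2 : v ≤ v ^ 2 := by nlinarith
  gcongr
  nlinarith

end GaussianMoment

theorem chi_asymptotics_general_d_general (d : ℕ) (hd : 1 ≤ d) (β D : ℝ) (hβ : 0 < β) (hD : 0 < D)
    (χ : ℝ → ℝ)
    (hχ' : ∀ v > (0 : ℝ), HasDerivAt χ
      (Real.exp (β * v ^ 2 / 2) / (v ^ (d - 1) * D) *
        ∫ w in (0 : ℝ)..v, Real.exp (-β * w ^ 2 / 2) * w ^ (d - 1)) v) :
    Tendsto (fun v => χ v /
        ((1 / 4) * Real.Gamma ((d : ℝ) / 2) * (2 / β) ^ ((d : ℝ) / 2 + 1) *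
          Real.exp (β * v ^ 2 / 2) / (D * v ^ d)))
      atTop (nhds 1) := by
  obtain ⟨k, rfl⟩ : ∃ k, d = k + 1 := ⟨d - 1, by omega⟩
  simp only [Nat.add_sub_cancel] at hχ'
  set C := (1 / 4) * Gamma (((k + 1 : ℕ) : ℝ) / 2) * (2 / β) ^ (((k + 1 : ℕ) : ℝ) / 2 + 1)
    with hC
  set I := 1 / 2 * Gamma (((k : ℝ) + 1) / 2) * (2 / β) ^ (((k : ℝ) + 1) / 2) with hI
  have hCβ : C * β = I := by
    rw [hC, hI, Nat.cast_succ, rpow_add_one (by positivity)]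
    field_simp
    ring
  have hIpos : 0 < I := by positivity
  have hden : Tendsto (fun v : ℝ => C * (β - (k + 1) / v ^ 2)) atTop (nhds I) := by
    rw [← hCβ]
    simpa using
      ((tendsto_const_nhds.div_atTop (tendsto_pow_atTop two_ne_zero)).const_sub β).const_mul C
  refine lhopital_atTop_of_tendsto_atTop ((eventually_gt_atTop 0).mono hχ')
    (g' := fun v => exp (β * v ^ 2 / 2) / (v ^ k * D) * (C * (β - (k + 1) / v ^ 2))) ?_ ?_ ?_ ?_
  · filter_upwards [eventually_gt_atTop 0] with v hv
    have h := (hasDerivAt_exp_mul_sq_div_pow β k hv.ne').const_mul (C / D)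
    exact (h.congr_deriv (by ring)).congr_of_eventuallyEq
      (Eventually.of_forall fun w => (div_mul_div_comm _ _ _ _).symm)
  · filter_upwards [eventually_gt_atTop 0, hden.eventually (lt_mem_nhds hIpos)] with v hv hv'
    exact mul_pos (by positivity) hv'
  · refine ((tendsto_exp_mul_sq_div_pow_atTop hβ (k + 1)).const_mul_atTop
      (by positivity : 0 < C / D)).congr fun v => div_mul_div_comm _ _ _ _
  · have h := (tendsto_intervalIntegral_exp_neg_mul_sq_mul_pow hβ k).div hden hIpos.ne'
    rw [div_self hIpos.ne'] at h
    refine h.congr' ?_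
    filter_upwards [eventually_gt_atTop 0] with v hv
    exact (mul_div_mul_left _ _ (by positivity)).symm

/-- Asymptotics of the incomplete Gaussian moment: for `χ` with `χ(0) = 0` and
`χ'(v) = (e^{βv²/2}/(v^{d−1} D)) ∫₀^v e^{−βw²/2} w^{d−1} dw` (constant `D > 0`),
one has `χ(v) ~ (1/4) Γ(d/2) (2/β)^{d/2+1} e^{βv²/2}/(D v^d)` as `v → ∞`. -/
theorem chi_asymptotics_general_d (d : ℕ) (hd : 1 ≤ d) (β D : ℝ) (hβ : 0 < β) (hD : 0 < D)
    (χ : ℝ → ℝ)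
    (hχ0 : χ 0 = 0) (hχcont : ContinuousOn χ (Ici 0))
    (hχ' : ∀ v > (0 : ℝ), HasDerivAt χ
      (Real.exp (β * v ^ 2 / 2) / (v ^ (d - 1) * D) *
        ∫ w in (0 : ℝ)..v, Real.exp (-β * w ^ 2 / 2) * w ^ (d - 1)) v) :
    Tendsto (fun v => χ v /
        ((1 / 4) * Real.Gamma ((d : ℝ) / 2) * (2 / β) ^ ((d : ℝ) / 2 + 1) *
          Real.exp (β * v ^ 2 / 2) / (D * v ^ d)))
      atTop (nhds 1) :=
  chi_asymptotics_general_d_general d hd β D hβ hD χ hχ'
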